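/- Let f : S → A be a homomorphism of commutative Noetherian rings such that A is finitely generated as an S-module, let M be a finitely generated A-module, and let Q ⊆ M be an A-submodule that is primary, i.e. Ass_A(M/Q) = {P} for a single prime P of A. Then Q is primary as an S-submodule with Ass_S(M/Q) = { f⁻¹(P) }; moreover f⁻¹(P) is the radical of the annihilator Ann_S(M/Q). -/

import Mathlib

/-!
Over a Noetherian ring the minimal primes of `Ann_A(N)` of a finite module `N` are associated
primes, so `Ass_A(N) = {P}` forces `√Ann_A(N) = P`, and pulling back along `f` gives
`√Ann_S(N) = f⁻¹(P)`. Annihilators of elements over `S` are pullbacks of those over `A`; hence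
`f⁻¹(P)` is `S`-associated, and every `S`-associated prime `q = √Ann_S(y)` contains
`√Ann_S(N) = f⁻¹(P)` and lies in the pullback of an `A`-associated prime containing `Ann_A(y)`,
which can only be `P`.
-/

theorem radical_annihilator_eq_of_associatedPrimes_eq_singleton {A : Type*} [CommRing A]
    [IsNoetherianRing A] {N : Type*} [AddCommGroup N] [Module A N] [Module.Finite A N]
    {P : Ideal A} (hN : associatedPrimes A N = {P}) :
    (Module.annihilator A N).radical = P := by
  have hne : Module.annihilator A N ≠ ⊤ := by
    rw [Ne, Module.annihilator_eq_top_iff]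
    intro
    exact Set.singleton_ne_empty P (hN ▸ associatedPrimes.eq_empty_of_subsingleton)
  have hsub : (Module.annihilator A N).minimalPrimes ⊆ {P} :=
    hN ▸ Module.associatedPrimes.minimalPrimes_annihilator_subset_associatedPrimes A N
  have hmin : (Module.annihilator A N).minimalPrimes = {P} :=
    (Set.nonempty_coe_sort.mp (Ideal.nonempty_minimalPrimes hne)).subset_singleton_iff.mp hsub
  rw [← Ideal.sInf_minimalPrimes, hmin, sInf_singleton]

section RestrictScalars

variable {S A N : Type*} [CommRing S] [CommRing A] [Algebra S A] [AddCommGroup N] [Module A N]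
  [Module S N] [IsScalarTower S A N]

theorem Submodule.comap_bot_colon_singleton (x : N) :
    ((⊥ : Submodule A N).colon {x}).comap (algebraMap S A) = (⊥ : Submodule S N).colon {x} := by
  ext s
  simp [Submodule.mem_colon_singleton]

theorem IsAssociatedPrime.comap {P : Ideal A} (h : IsAssociatedPrime P N) :
    IsAssociatedPrime (P.comap (algebraMap S A)) N := by
  obtain ⟨hP, x, rfl⟩ := h
  exact ⟨hP.comap _, x, by rw [Ideal.comap_radical, Submodule.comap_bot_colon_singleton]⟩

theorem IsAssociatedPrime.exists_le_comap [IsNoetherianRing A] {q : Ideal S}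
    (h : IsAssociatedPrime q N) :
    ∃ P ∈ associatedPrimes A N, q ≤ P.comap (algebraMap S A) := by
  obtain ⟨hq, y, rfl⟩ := h
  have hy : y ≠ 0 := by
    rintro rfl
    exact hq.ne_top (by rw [Submodule.colon_singleton_zero, Ideal.radical_top])
  obtain ⟨P, hP, hle⟩ := exists_le_isAssociatedPrime_of_isNoetherianRing A y hy
  refine ⟨P, hP, (hP.isPrime.comap _).radical_le_iff.mpr ?_⟩
  rw [← Submodule.comap_bot_colon_singleton (A := A)]
  exact Ideal.comap_mono hle

end RestrictScalars

theorem primary_comap_general {S A : Type*} [CommRing S] [CommRing A]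
    [IsNoetherianRing A] [Algebra S A]
    (M : Type*) [AddCommGroup M] [Module A M] [Module S M] [IsScalarTower S A M]
    [Module.Finite A M] (Q : Submodule A M) (P : Ideal A)
    (hQ : associatedPrimes A (M ⧸ Q) = {P}) :
    associatedPrimes S (M ⧸ Q) = {P.comap (algebraMap S A)} ∧
      P.comap (algebraMap S A) = (Module.annihilator S (M ⧸ Q)).radical := by
  have hP : P ∈ associatedPrimes A (M ⧸ Q) := hQ ▸ Set.mem_singleton P
  have hrad : (Module.annihilator S (M ⧸ Q)).radical = P.comap (algebraMap S A) := by
    rw [← Module.comap_annihilator (R := A), ← Ideal.comap_radical,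
      radical_annihilator_eq_of_associatedPrimes_eq_singleton hQ]
  refine ⟨Set.eq_singleton_iff_unique_mem.mpr
    ⟨IsAssociatedPrime.comap hP, fun q hq ↦ le_antisymm ?_ ?_⟩, hrad.symm⟩
  · obtain ⟨P', hP', hle⟩ := hq.exists_le_comap (A := A)
    obtain rfl : P' = P := by rwa [hQ] at hP'
    exact hle
  · rw [← hrad, hq.isPrime.radical_le_iff, ← Submodule.annihilator_top]
    exact hq.annihilator_le

/-- Let `f : S → A` be a homomorphism of commutative Noetherian rings
(encoded as an `Algebra S A` structure, so `f = algebraMap S A`) with `A` finitely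
generated as an `S`-module, `M` a finitely generated `A`-module, and `Q ⊆ M` an
`A`-submodule which is primary, i.e. `Ass_A(M/Q) = {P}` for a single prime `P`.
Then `Q` is primary as an `S`-submodule with `Ass_S(M/Q) = {f⁻¹(P)}`; moreover
`f⁻¹(P)` is the radical of the annihilator `Ann_S(M/Q)`. -/
theorem primary_comap {S A : Type*} [CommRing S] [CommRing A]
    [IsNoetherianRing S] [IsNoetherianRing A] [Algebra S A] [Module.Finite S A]
    (M : Type*) [AddCommGroup M] [Module A M] [Module S M] [IsScalarTower S A M]
    [Module.Finite A M] (Q : Submodule A M) (P : Ideal A) (hP : P.IsPrime)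
    (hQ : associatedPrimes A (M ⧸ Q) = {P}) :
    associatedPrimes S (M ⧸ Q) = {P.comap (algebraMap S A)} ∧
      P.comap (algebraMap S A) = (Module.annihilator S (M ⧸ Q)).radical :=
  primary_comap_general M Q P hQ
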